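/- Let (A_r, φ_s^r), (B_r, ψ_s^r), (C_r, χ_s^r) be inverse systems of modules over a ring indexed by ℕ fitting into short exact sequences 0 → A_r → B_r → C_r → 0 compatible with the bonding maps. If the system (A_r) satisfies the Mittag-Leffler condition (in particular, if all maps φ_s^r are surjective), then the induced sequence 0 → lim← A_r → lim← B_r → lim← C_r → 0 is exact; in particular lim← B_r → lim← C_r is surjective. -/
import Mathlib


/-- Grothendieck's Mittag–Leffler criterion: for compatible short exact sequences
0 → A_r → B_r → C_r → 0 of modules indexed by ℕ, if the system (A_r) satisfies the
Mittag–Leffler condition then 0 → lim← A_r → lim← B_r → lim← C_r → 0 is exact;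
in particular lim← B_r → lim← C_r is surjective. -/
theorem stmt_11 {R : Type*} [Ring R]
    {A B C : ℕ → Type*}
    [∀ r, AddCommGroup (A r)] [∀ r, Module R (A r)]
    [∀ r, AddCommGroup (B r)] [∀ r, Module R (B r)]
    [∀ r, AddCommGroup (C r)] [∀ r, Module R (C r)]
    (f : ∀ r, A r →ₗ[R] B r) (g : ∀ r, B r →ₗ[R] C r)
    (hfinj : ∀ r, Function.Injective (f r))
    (hexact : ∀ r, LinearMap.range (f r) = LinearMap.ker (g r))
    (hgsurj : ∀ r, Function.Surjective (g r))
    (φ : ∀ r s, s ≤ r → A r →ₗ[R] A s)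
    (ψ : ∀ r s, s ≤ r → B r →ₗ[R] B s)
    (χ : ∀ r s, s ≤ r → C r →ₗ[R] C s)
    (hφid : ∀ r (x : A r), φ r r le_rfl x = x)
    (hψid : ∀ r (x : B r), ψ r r le_rfl x = x)
    (hχid : ∀ r (x : C r), χ r r le_rfl x = x)
    (hφcomp : ∀ r s t (hsr : s ≤ r) (hts : t ≤ s) (x : A r),
      φ s t hts (φ r s hsr x) = φ r t (hts.trans hsr) x)
    (hψcomp : ∀ r s t (hsr : s ≤ r) (hts : t ≤ s) (x : B r),
      ψ s t hts (ψ r s hsr x) = ψ r t (hts.trans hsr) x)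
    (hχcomp : ∀ r s t (hsr : s ≤ r) (hts : t ≤ s) (x : C r),
      χ s t hts (χ r s hsr x) = χ r t (hts.trans hsr) x)
    (hcomm₁ : ∀ r s (h : s ≤ r) (x : A r), ψ r s h (f r x) = f s (φ r s h x))
    (hcomm₂ : ∀ r s (h : s ≤ r) (x : B r), χ r s h (g r x) = g s (ψ r s h x))
    (hML : ∀ m, ∃ n, ∃ hmn : m ≤ n, ∀ n' (h' : n ≤ n'),
      LinearMap.range (φ n' m (hmn.trans h')) = LinearMap.range (φ n m hmn)) :
    (∀ x y : {x : ∀ r, A r // ∀ r s (h : s ≤ r), φ r s h (x r) = x s},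
      (∀ r, f r (x.1 r) = f r (y.1 r)) → x = y) ∧
    (∀ y : {y : ∀ r, B r // ∀ r s (h : s ≤ r), ψ r s h (y r) = y s},
      (∀ r, g r (y.1 r) = 0) ↔
      (∃ x : {x : ∀ r, A r // ∀ r s (h : s ≤ r), φ r s h (x r) = x s},
        ∀ r, f r (x.1 r) = y.1 r)) ∧
    (∀ z : {z : ∀ r, C r // ∀ r s (h : s ≤ r), χ r s h (z r) = z s},
      ∃ y : {y : ∀ r, B r // ∀ r s (h : s ≤ r), ψ r s h (y r) = y s},
        ∀ r, g r (y.1 r) = z.1 r) := by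
  classical
  refine ⟨?_, ?_, ?_⟩
  · intro x y h
    exact Subtype.ext (funext fun r => hfinj r (h r))
  · intro y
    constructor
    · intro h
      have hx : ∀ r, ∃ a, f r a = y.1 r := by
        intro r
        have : y.1 r ∈ LinearMap.ker (g r) := h r
        rw [← hexact] at this
        exact this
      choose a ha using hx
      refine ⟨⟨a, ?_⟩, ha⟩
      intro r s hsr
      apply hfinj s
      rw [← hcomm₁ r s hsr, ha r, ha s, y.2 r s hsr]
    · rintro ⟨x, hxy⟩ r
      rw [← hxy r]
      have : f r (x.1 r) ∈ LinearMap.range (f r) := ⟨_, rfl⟩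
      rw [hexact] at this
      exact this
  · intro z
    choose N hN hstab using hML
    choose b hb using fun r => hgsurj r (z.1 r)
    -- transport of lifts along the system
    have gψ : ∀ n m (h : m ≤ n) (x : B n), g n x = z.1 n → g m (ψ n m h x) = z.1 m := by
      intro n m h x hx
      rw [← hcomm₂ n m h, hx, z.2 n m h]
    -- the eventual image of lifts
    set S : ∀ m, Set (B m) :=
      fun m => {x | ∃ c, g (N m) c = z.1 (N m) ∧ ψ (N m) m (hN m) c = x} with hSdef
    have lemA2 : ∀ m k (hk : N m ≤ k), ∀ x ∈ S m,
        ∃ c, g k c = z.1 k ∧ ψ k m ((hN m).trans hk) c = x := by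
      intro m k hk x hx
      obtain ⟨c, hc, rfl⟩ := hx
      have h0 : c - ψ k (N m) hk (b k) ∈ LinearMap.ker (g (N m)) := by
        show g (N m) _ = 0
        rw [map_sub, hc, gψ k (N m) hk (b k) (hb k), sub_self]
      rw [← hexact] at h0
      obtain ⟨a0, ha0⟩ := h0
      have hmem : φ (N m) m (hN m) a0 ∈ LinearMap.range (φ k m ((hN m).trans hk)) := by
        rw [hstab m k hk]
        exact ⟨a0, rfl⟩
      obtain ⟨a1, ha1⟩ := hmem
      refine ⟨b k + f k a1, ?_, ?_⟩
      · have hker : f k a1 ∈ LinearMap.ker (g k) := by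
          rw [← hexact]; exact ⟨a1, rfl⟩
        have hker' : g k (f k a1) = 0 := hker
        rw [map_add, hb k, hker', add_zero]
      · have e : f m (φ (N m) m (hN m) a0)
            = ψ (N m) m (hN m) c - ψ k m ((hN m).trans hk) (b k) := by
          rw [← hcomm₁ (N m) m (hN m) a0, ha0, map_sub, hψcomp k (N m) m hk (hN m)]
        rw [map_add, hcomm₁ k m ((hN m).trans hk) a1, ha1, e]
        abel
    have lemB : ∀ m x, x ∈ S m → ∃ y ∈ S (m + 1), ψ (m + 1) m (Nat.le_succ m) y = x := by
      intro m x hx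
      have hk1 : N m ≤ max (N m) (N (m + 1)) := le_max_left _ _
      have hk2 : N (m + 1) ≤ max (N m) (N (m + 1)) := le_max_right _ _
      obtain ⟨c, hc, hcx⟩ := lemA2 m (max (N m) (N (m + 1))) hk1 x hx
      refine ⟨ψ (max (N m) (N (m + 1))) (m + 1) ((hN (m + 1)).trans hk2) c, ?_, ?_⟩
      · exact ⟨ψ (max (N m) (N (m + 1))) (N (m + 1)) hk2 c,
          gψ _ _ hk2 c hc,
          by rw [hψcomp _ _ _ hk2 (hN (m + 1))]⟩
      · rw [hψcomp _ _ _ ((hN (m + 1)).trans hk2) (Nat.le_succ m), hcx]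
    choose nxt hnxt1 hnxt2 using lemB
    have h0 : ψ (N 0) 0 (hN 0) (b (N 0)) ∈ S 0 := ⟨b (N 0), hb (N 0), rfl⟩
    let seq : ∀ m, {x : B m // x ∈ S m} := fun m =>
      Nat.rec ⟨_, h0⟩ (fun n p => ⟨nxt n p.1 p.2, hnxt1 n p.1 p.2⟩) m
    have hseqstep : ∀ m, ψ (m + 1) m (Nat.le_succ m) (seq (m + 1)).1 = (seq m).1 :=
      fun m => hnxt2 m (seq m).1 (seq m).2
    have hcompat : ∀ r s (h : s ≤ r), ψ r s h (seq r).1 = (seq s).1 := by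
      intro r s h
      induction r, h using Nat.le_induction with
      | base => exact hψid s _
      | succ n hn ih =>
        rw [← ih, ← hψcomp (n + 1) n s (Nat.le_succ n) hn, hseqstep n]
    have hg : ∀ r, g r (seq r).1 = z.1 r := by
      intro r
      obtain ⟨c, hc, he⟩ := (seq r).2
      rw [← he]
      exact gψ (N r) r (hN r) c hc
    exact ⟨⟨fun r => (seq r).1, hcompat⟩, hg⟩
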